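/- Let k >= 1 and let d = (d_1, ..., d_k) be a vector of nonnegative integers. Then \sum over all pairs of vectors b, c \in \mathbb{N}^k with b + c = d (componentwise) of (t^{-1} q)^{b_1 + ... + b_k} q^{b_1^2 + ... + b_k^2 + 2 \sum_{i=1}^{k-1} b_{i+1} (d_1 + ... + d_i)} / (\prod_{i=1}^{k} (q^2;q^2)_{b_i} (q^2;q^2)_{c_i}) = (-t^{-1} q^2; q^2)_{d_1 + ... + d_k} / \prod_{i=1}^{k} (q^2;q^2)_{d_i}. -/

import Mathlib

/-!
Every summand factorizes over the coordinates, so the sum is a product of one-variable sums.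
With `Q = q²` and `D_i = d_1 + ⋯ + d_{i-1}`, the `i`-th one is the `q`-binomial theorem
`∑_{b+c=n} Q^(b choose 2) x^b / ((Q;Q)_b (Q;Q)_c) = (-x;Q)_n / (Q;Q)_n` at `x = t⁻¹ q² Q^(D_i)`,
and the numerators `(-t⁻¹q² Q^(D_i); Q)_(d_i)` telescope to `(-t⁻¹q²; Q)_(d_1 + ⋯ + d_k)`.
-/

open Finset

/-- The Pochhammer symbol `(x; q)_n = ∏_{j=0}^{n-1} (1 - x q^j)`. -/
noncomputable def qPoch {K : Type*} [Field K] (x q : K) (n : ℕ) : K :=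
  ∏ j ∈ Finset.range n, (1 - x * q ^ j)

section QPochhammer

variable {K : Type*} [Field K]

@[simp]
lemma qPoch_zero (x Q : K) : qPoch x Q 0 = 1 := prod_range_zero _

lemma qPoch_succ (x Q : K) (n : ℕ) : qPoch x Q (n + 1) = qPoch x Q n * (1 - x * Q ^ n) :=
  prod_range_succ _ _

lemma qPoch_succ' (x Q : K) (n : ℕ) : qPoch x Q (n + 1) = (1 - x) * qPoch (x * Q) Q n := by
  simp only [qPoch, prod_range_succ', pow_succ, pow_zero, mul_one, mul_assoc, mul_comm Q]
  ring

lemma qPoch_add (x Q : K) (m n : ℕ) :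
    qPoch x Q (m + n) = qPoch x Q m * qPoch (x * Q ^ m) Q n := by
  simp only [qPoch, prod_range_add, pow_add, mul_assoc, mul_comm (Q ^ m)]

lemma qPoch_self_succ (Q : K) (n : ℕ) : qPoch Q Q (n + 1) = qPoch Q Q n * (1 - Q ^ (n + 1)) := by
  rw [qPoch_succ, pow_succ']

theorem sum_antidiagonal_qbinomial (Q : K) (hQ : ∀ n, qPoch Q Q n ≠ 0) (d : ℕ) (x : K) :
    ∑ p ∈ antidiagonal d, Q ^ p.1.choose 2 * x ^ p.1 / (qPoch Q Q p.1 * qPoch Q Q p.2)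
      = qPoch (-x) Q d / qPoch Q Q d := by
  have hfac n : (1 - Q ^ (n + 1) : K) ≠ 0 := fun h ↦
    hQ (n + 1) (by rw [qPoch_self_succ, h, mul_zero])
  induction d generalizing x with
  | zero => simp
  | succ d ih =>
    set T : K → ℕ × ℕ → K := fun x p ↦
      Q ^ p.1.choose 2 * x ^ p.1 / (qPoch Q Q p.1 * qPoch Q Q p.2)
    -- Split `1 - Q ^ (b + c)` as `Q ^ b (1 - Q ^ c) + (1 - Q ^ b)`: each part collapses one index.
    have hsplit : (∑ p ∈ antidiagonal (d + 1), T x p) * (1 - Q ^ (d + 1))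
        = ∑ p ∈ antidiagonal (d + 1), T x p * (Q ^ p.1 * (1 - Q ^ p.2))
          + ∑ p ∈ antidiagonal (d + 1), T x p * (1 - Q ^ p.1) := by
      rw [sum_mul, ← sum_add_distrib]
      refine sum_congr rfl fun p hp ↦ ?_
      rw [← mem_antidiagonal.mp hp, pow_add]
      ring
    have hlower : ∑ p ∈ antidiagonal (d + 1), T x p * (Q ^ p.1 * (1 - Q ^ p.2))
        = qPoch (-(x * Q)) Q d / qPoch Q Q d := by
      rw [Nat.sum_antidiagonal_succ', ← ih]
      simp only [T, pow_zero, sub_self, mul_zero, zero_add]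
      refine sum_congr rfl fun p _ ↦ ?_
      rw [qPoch_self_succ]
      field_simp [hQ p.1, hQ p.2, hfac p.2]
      ring
    have hupper : ∑ p ∈ antidiagonal (d + 1), T x p * (1 - Q ^ p.1)
        = x * (qPoch (-(x * Q)) Q d / qPoch Q Q d) := by
      rw [Nat.sum_antidiagonal_succ, ← ih, mul_sum]
      simp only [T, pow_zero, sub_self, mul_zero, zero_add]
      refine sum_congr rfl fun p _ ↦ ?_
      rw [qPoch_self_succ, Nat.choose_succ_succ', Nat.choose_one_right]
      field_simp [hQ p.1, hQ p.2, hfac p.1]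
      ring
    rw [← mul_div_cancel_right₀ (∑ p ∈ antidiagonal (d + 1), T x p) (hfac d), hsplit, hlower,
      hupper, qPoch_succ', qPoch_self_succ, neg_mul]
    field_simp [hQ d, hfac d]
    ring

lemma sum_filter_lt_castSucc {M : Type*} [AddCommMonoid M] {k : ℕ} (f : Fin (k + 1) → M)
    (j : Fin k) :
    ∑ l ∈ univ.filter (· < j.castSucc), f l = ∑ l ∈ univ.filter (· < j), f l.castSucc := by
  simp [sum_filter, Fin.sum_univ_castSucc, (Fin.castSucc_lt_last j).not_gt]

lemma sum_filter_lt_last {M : Type*} [AddCommMonoid M] {k : ℕ} (f : Fin (k + 1) → M) :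
    ∑ l ∈ univ.filter (· < Fin.last k), f l = ∑ l : Fin k, f l.castSucc := by
  simp [sum_filter, Fin.sum_univ_castSucc, Fin.castSucc_lt_last]

lemma prod_qPoch_shift_partial_sum (x Q : K) {k : ℕ} (d : Fin k → ℕ) :
    ∏ i, qPoch (x * Q ^ ∑ l ∈ univ.filter (· < i), d l) Q (d i) = qPoch x Q (∑ i, d i) := by
  induction k with
  | zero => simp
  | succ k ih =>
    rw [Fin.prod_univ_castSucc, Fin.sum_univ_castSucc, qPoch_add, sum_filter_lt_last]
    simp only [sum_filter_lt_castSucc]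
    rw [ih]

lemma two_mul_choose_two_add_self (n : ℕ) : 2 * n.choose 2 + n = n ^ 2 := by
  induction n with
  | zero => rfl
  | succ n ih =>
    rw [Nat.choose_succ_succ', Nat.choose_one_right]
    linear_combination ih

lemma pow_mul_pow_eq_choose_two (s q : K) (a D : ℕ) :
    (s * q) ^ a * q ^ (a ^ 2 + 2 * (a * D))
      = (q ^ 2) ^ a.choose 2 * (s * q ^ 2 * (q ^ 2) ^ D) ^ a := by
  have hexp : a + (a ^ 2 + 2 * (a * D)) = 2 * a.choose 2 + 2 * a + 2 * (D * a) := by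
    rw [← two_mul_choose_two_add_self]
    ring
  calc (s * q) ^ a * q ^ (a ^ 2 + 2 * (a * D))
        = s ^ a * q ^ (a + (a ^ 2 + 2 * (a * D))) := by ring
    _ = s ^ a * q ^ (2 * a.choose 2 + 2 * a + 2 * (D * a)) := by rw [hexp]
    _ = _ := by ring

lemma sum_fin_qbinomial (q s : K) (hpoch : ∀ n, qPoch (q ^ 2) (q ^ 2) n ≠ 0) (D n : ℕ) :
    ∑ a : Fin (n + 1), (s * q) ^ (a : ℕ) * q ^ ((a : ℕ) ^ 2 + 2 * ((a : ℕ) * D)) /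
        (qPoch (q ^ 2) (q ^ 2) a * qPoch (q ^ 2) (q ^ 2) (n - a))
      = qPoch (-s * q ^ 2 * (q ^ 2) ^ D) (q ^ 2) n / qPoch (q ^ 2) (q ^ 2) n := by
  rw [Fin.sum_univ_eq_sum_range (fun a ↦ (s * q) ^ a * q ^ (a ^ 2 + 2 * (a * D)) /
      (qPoch (q ^ 2) (q ^ 2) a * qPoch (q ^ 2) (q ^ 2) (n - a))),
    ← Nat.sum_antidiagonal_eq_sum_range_succ (fun a c ↦ (s * q) ^ a * q ^ (a ^ 2 + 2 * (a * D)) /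
      (qPoch (q ^ 2) (q ^ 2) a * qPoch (q ^ 2) (q ^ 2) c))]
  simp only [pow_mul_pow_eq_choose_two]
  rw [sum_antidiagonal_qbinomial _ hpoch, neg_mul, neg_mul]

end QPochhammer

theorem stmt13_general {K : Type*} [Field K] (q t : K)
    (hpoch : ∀ n : ℕ, qPoch (q ^ 2) (q ^ 2) n ≠ 0)
    (k : ℕ) (d : Fin k → ℕ) :
    (∑ b : (i : Fin k) → Fin (d i + 1),
        (t⁻¹ * q) ^ (∑ i, ((b i : ℕ))) *
          q ^ ((∑ i, ((b i : ℕ)) ^ 2)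
              + 2 * ∑ i, (b i : ℕ) * (∑ l ∈ Finset.univ.filter (fun l => l < i), d l)) /
          ∏ i, (qPoch (q ^ 2) (q ^ 2) ((b i : ℕ)) *
            qPoch (q ^ 2) (q ^ 2) (d i - (b i : ℕ))))
      = qPoch (-(t⁻¹) * q ^ 2) (q ^ 2) (∑ i, d i) /
          ∏ i, qPoch (q ^ 2) (q ^ 2) (d i) := by
  calc _ = ∑ b : (i : Fin k) → Fin (d i + 1), ∏ i, (t⁻¹ * q) ^ (b i : ℕ) *
          q ^ ((b i : ℕ) ^ 2 + 2 * ((b i : ℕ) * ∑ l ∈ univ.filter (· < i), d l)) /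
          (qPoch (q ^ 2) (q ^ 2) (b i) * qPoch (q ^ 2) (q ^ 2) (d i - b i)) := by
        simp only [prod_div_distrib, prod_mul_distrib, prod_pow_eq_pow_sum, sum_add_distrib,
          ← mul_sum]
    _ = ∏ i, qPoch (-(t⁻¹) * q ^ 2 * (q ^ 2) ^ ∑ l ∈ univ.filter (· < i), d l) (q ^ 2) (d i) /
          qPoch (q ^ 2) (q ^ 2) (d i) :=
        (Fintype.prod_sum _).symm.trans
          (prod_congr rfl fun i _ ↦ sum_fin_qbinomial q t⁻¹ hpoch _ (d i))
    _ = _ := by rw [prod_div_distrib, prod_qPoch_shift_partial_sum]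

theorem stmt13 {K : Type*} [Field K] (q t : K) (hq : q ≠ 0) (ht : t ≠ 0)
    (hpoch : ∀ n : ℕ, qPoch (q ^ 2) (q ^ 2) n ≠ 0)
    (k : ℕ) (hk : 1 ≤ k) (d : Fin k → ℕ) :
    (∑ b : (i : Fin k) → Fin (d i + 1),
        (t⁻¹ * q) ^ (∑ i, ((b i : ℕ))) *
          q ^ ((∑ i, ((b i : ℕ)) ^ 2)
              + 2 * ∑ i, (b i : ℕ) * (∑ l ∈ Finset.univ.filter (fun l => l < i), d l)) /
          ∏ i, (qPoch (q ^ 2) (q ^ 2) ((b i : ℕ)) *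
            qPoch (q ^ 2) (q ^ 2) (d i - (b i : ℕ))))
      = qPoch (-(t⁻¹) * q ^ 2) (q ^ 2) (∑ i, d i) /
          ∏ i, qPoch (q ^ 2) (q ^ 2) (d i) :=
  stmt13_general q t hpoch k d
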